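/- arXiv:1304.0290 — 4 statements merged into one kernel-verified Lean document; each statement's English description precedes it below -/
import Mathlib

section
/- For any function f on a locally finite weighted graph, the iterated carré du champ satisfies Γ₂(f,f)(x) = (1/4)|D²f|²(x) − (1/2)|∇f|²(x) + (1/2)(Δf)²(x), where |D²f|²(x) := (1/d_x) Σ_{y∼x} (μ_{xy}/d_y) Σ_{z∼y} μ_{yz} (f(x) − 2f(y) + f(z))². -/
open Finset Real

/-- Graph Laplacian `Δf(x) = (1/d x) * Σ_{y ∈ N x} μ x y * (f y - f x)`. -/
noncomputable def glap {V : Type*} (N : V → Finset V) (μ : V → V → ℝ) (d : V → ℝ)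
    (f : V → ℝ) (x : V) : ℝ :=
  (1 / d x) * ∑ y ∈ N x, μ x y * (f y - f x)

/-- Gradient norm squared `|∇f|²(x)`. -/
noncomputable def ggrad {V : Type*} (N : V → Finset V) (μ : V → V → ℝ) (d : V → ℝ)
    (f : V → ℝ) (x : V) : ℝ :=
  (1 / d x) * ∑ y ∈ N x, μ x y * (f y - f x) ^ 2

/-- Pointwise inner product `(∇f, ∇g)(x)`. -/
noncomputable def ginner {V : Type*} (N : V → Finset V) (μ : V → V → ℝ) (d : V → ℝ)
    (f g : V → ℝ) (x : V) : ℝ :=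
  (1 / d x) * ∑ y ∈ N x, μ x y * (f y - f x) * (g y - g x)

/-- Hessian norm squared `|D²f|²(x)`. -/
noncomputable def ghess {V : Type*} (N : V → Finset V) (μ : V → V → ℝ) (d : V → ℝ)
    (f : V → ℝ) (x : V) : ℝ :=
  (1 / d x) * ∑ y ∈ N x, (μ x y / d y) * ∑ z ∈ N y, μ y z * (f x - 2 * f y + f z) ^ 2

/-- Carré du champ `Γ(f,g)(x) = (1/2)[Δ(fg) - fΔg - gΔf](x)`. -/
noncomputable def ggamma {V : Type*} (N : V → Finset V) (μ : V → V → ℝ) (d : V → ℝ)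
    (f g : V → ℝ) (x : V) : ℝ :=
  (1 / 2) * (glap N μ d (fun y => f y * g y) x - f x * glap N μ d g x - g x * glap N μ d f x)

/-- Iterated carré du champ `Γ₂(f,f)(x) = (1/2)[ΔΓ(f,f) - 2Γ(f,Δf)](x)`. -/
noncomputable def ggamma2 {V : Type*} (N : V → Finset V) (μ : V → V → ℝ) (d : V → ℝ)
    (f : V → ℝ) (x : V) : ℝ :=
  (1 / 2) * (glap N μ d (ggamma N μ d f f) x - 2 * ggamma N μ d f (glap N μ d f) x)

/-- `Γ₂(f,f)(x) = (1/4)|D²f|²(x) - (1/2)|∇f|²(x) + (1/2)(Δf)²(x)`. -/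
theorem stmt4 {V : Type*} (N : V → Finset V) (μ : V → V → ℝ) (d : V → ℝ)
    (hsym : ∀ x y, μ x y = μ y x) (hN : ∀ x y, y ∈ N x ↔ x ∈ N y)
    (hnn : ∀ x y, 0 ≤ μ x y) (hd : ∀ x, d x = ∑ y ∈ N x, μ x y)
    (hdpos : ∀ x, 0 < d x) (f : V → ℝ) (x : V) :
    ggamma2 N μ d f x
      = (1 / 4) * ghess N μ d f x - (1 / 2) * ggrad N μ d f x
        + (1 / 2) * (glap N μ d f x) ^ 2 := by
  have hd0 : ∀ w : V, d w ≠ 0 := fun w => (hdpos w).ne'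
  have e1 : ∀ w : V, d w * ggrad N μ d f w = ∑ z ∈ N w, μ w z * (f z - f w) ^ 2 := by
    intro w; simp only [ggrad]
    rw [← mul_assoc, mul_one_div, div_self (hd0 w), one_mul]
  have e2 : ∀ w : V, d w * glap N μ d f w = ∑ z ∈ N w, μ w z * (f z - f w) := by
    intro w; simp only [glap]
    rw [← mul_assoc, mul_one_div, div_self (hd0 w), one_mul]
  have hgam : ∀ w : V, ggamma N μ d f f w = (1 / 2) * ggrad N μ d f w := by
    intro w
    have key : ∑ y ∈ N w, μ w y * (f y * f y - f w * f w)
        - f w * ∑ y ∈ N w, μ w y * (f y - f w)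
        - f w * ∑ y ∈ N w, μ w y * (f y - f w)
        = ∑ y ∈ N w, μ w y * (f y - f w) ^ 2 := by
      rw [Finset.mul_sum, ← Finset.sum_sub_distrib, ← Finset.sum_sub_distrib]
      exact Finset.sum_congr rfl fun y _ => by ring
    simp only [ggamma, glap, ggrad]
    linear_combination (1 / (2 * d w)) * key
  have hz : ∀ y : V, ∑ z ∈ N y, μ y z * (f x - 2 * f y + f z) ^ 2
      = d y * ggrad N μ d f y + 2 * (f x - f y) * (d y * glap N μ d f y)
        + (f x - f y) ^ 2 * d y := by
    intro y
    rw [e1, e2, hd y, Finset.mul_sum, Finset.mul_sum, ← Finset.sum_add_distrib,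
      ← Finset.sum_add_distrib]
    exact Finset.sum_congr rfl fun z _ => by ring
  have hhess : ghess N μ d f x = (1 / d x) * ∑ y ∈ N x, μ x y *
      (ggrad N μ d f y + 2 * (f x - f y) * glap N μ d f y + (f x - f y) ^ 2) := by
    simp only [ghess]
    congr 1
    refine Finset.sum_congr rfl fun y _ => ?_
    rw [hz y]
    field_simp [hd0 y]
  have hlg : glap N μ d (ggamma N μ d f f) x
      = (1 / (2 * d x)) * (∑ y ∈ N x, μ x y * ggrad N μ d f y)
        - (1 / 2) * ggrad N μ d f x := by
    have key : ∑ y ∈ N x, μ x y * (ggamma N μ d f f y - ggamma N μ d f f x)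
        = (1 / 2) * (∑ y ∈ N x, μ x y * ggrad N μ d f y)
          - (1 / 2) * ggrad N μ d f x * d x := by
      rw [hd x, Finset.mul_sum, Finset.mul_sum, ← Finset.sum_sub_distrib]
      refine Finset.sum_congr rfl fun y _ => ?_
      rw [hgam y, hgam x]; ring
    show (1 / d x) * ∑ y ∈ N x, μ x y * (ggamma N μ d f f y - ggamma N μ d f f x) = _
    rw [key]
    field_simp [hd0 x]
  have hfg : ggamma N μ d f (glap N μ d f) x
      = (1 / (2 * d x)) * (∑ y ∈ N x, μ x y * ((f y - f x) * glap N μ d f y))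
        - (1 / 2) * glap N μ d f x ^ 2 := by
    have key : ∑ y ∈ N x, μ x y * (f y * glap N μ d f y - f x * glap N μ d f x)
        - f x * ∑ y ∈ N x, μ x y * (glap N μ d f y - glap N μ d f x)
        = ∑ y ∈ N x, μ x y * ((f y - f x) * glap N μ d f y) := by
      rw [Finset.mul_sum, ← Finset.sum_sub_distrib]
      exact Finset.sum_congr rfl fun y _ => by ring
    show (1 / 2) * ((1 / d x) * ∑ y ∈ N x, μ x y *
          (f y * glap N μ d f y - f x * glap N μ d f x)
        - f x * ((1 / d x) * ∑ y ∈ N x, μ x y * (glap N μ d f y - glap N μ d f x))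
        - glap N μ d f x * glap N μ d f x) = _
    linear_combination (1 / (2 * d x)) * key
  have hsplit : ∑ y ∈ N x, μ x y *
        (ggrad N μ d f y + 2 * (f x - f y) * glap N μ d f y + (f x - f y) ^ 2)
      = (∑ y ∈ N x, μ x y * ggrad N μ d f y)
        - 2 * (∑ y ∈ N x, μ x y * ((f y - f x) * glap N μ d f y))
        + d x * ggrad N μ d f x := by
    rw [e1 x, Finset.mul_sum, ← Finset.sum_sub_distrib, ← Finset.sum_add_distrib]
    exact Finset.sum_congr rfl fun y _ => by ring
  simp only [ggamma2]
  rw [hlg, hfg, hhess, hsplit]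
  field_simp [hd0 x]
  ring
end

section
/- Suppose f(t,x) solves the heat equation ∂_t f = Δf on a locally finite weighted graph satisfying the curvature condition Γ₂(g,g) ≥ (1/m)(Δg)² + (k/2)|∇g|² (for all functions g, with constants m > 0, k ∈ ℝ). Then (∂_t − Δ)((1/2)|∇f|²)(t,x) ≤ (−k + max(2 − 2/m, 0)) |∇f|²(t,x) at every vertex x and time t. -/
open Finset Real

/-
The heat flow turns `(∂ₜ - Δ)(½|∇f|²)` into `2Γ(f, Δf) - ΔΓ(f, f) = -2Γ₂(f, f)`, so the
curvature condition bounds it by `-k|∇f|² - (2/m)(Δf)²`, and the last term is nonpositive.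
-/

section GraphCalculus

variable {V : Type*} (N : V → Finset V) (μ : V → V → ℝ) (d : V → ℝ)

lemma ggamma_eq_half_ginner (f g : V → ℝ) (x : V) :
    ggamma N μ d f g x = (1 / 2) * ginner N μ d f g x := by
  unfold ggamma ginner glap
  simp only [Finset.mul_sum, ← Finset.sum_sub_distrib]
  exact Finset.sum_congr rfl fun y _ => by ring

lemma ginner_self (f : V → ℝ) (x : V) : ginner N μ d f f x = ggrad N μ d f x := by
  unfold ginner ggrad
  congr 1
  exact Finset.sum_congr rfl fun y _ => by ring

lemma ggrad_nonneg (hnn : ∀ x y, 0 ≤ μ x y) (hdpos : ∀ x, 0 < d x) (f : V → ℝ) (x : V) :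
    0 ≤ ggrad N μ d f x :=
  mul_nonneg (one_div_nonneg.mpr (hdpos x).le)
    (Finset.sum_nonneg fun y _ => mul_nonneg (hnn x y) (sq_nonneg _))

lemma hasDerivAt_ggrad {f : ℝ → V → ℝ} {f' : V → ℝ} {t : ℝ}
    (hf : ∀ y, HasDerivAt (fun s => f s y) (f' y) t) (x : V) :
    HasDerivAt (fun s => ggrad N μ d (f s) x) (2 * ginner N μ d (f t) f' x) t := by
  have hsum : HasDerivAt (fun s => ∑ y ∈ N x, μ x y * (f s y - f s x) ^ 2)
      (∑ y ∈ N x, μ x y * (2 * (f t y - f t x) ^ 1 * (f' y - f' x))) t :=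
    HasDerivAt.fun_sum fun y _ => (((hf y).sub (hf x)).pow 2).const_mul (μ x y)
  refine (hsum.const_mul (1 / d x)).congr_deriv ?_
  unfold ginner
  simp only [Finset.mul_sum]
  exact Finset.sum_congr rfl fun y _ => by ring

lemma ginner_glap_sub_glap_half_ggrad (f : V → ℝ) (x : V) :
    ginner N μ d f (glap N μ d f) x - glap N μ d (fun y => (1 / 2) * ggrad N μ d f y) x
      = -2 * ggamma2 N μ d f x := by
  have hhalf : (fun y => (1 / 2) * ggrad N μ d f y) = ggamma N μ d f f := by
    funext y
    rw [ggamma_eq_half_ginner, ginner_self]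
  rw [hhalf, ggamma2, ggamma_eq_half_ginner]
  ring

end GraphCalculus

theorem stmt10_general {V : Type*} (N : V → Finset V) (μ : V → V → ℝ) (d : V → ℝ)
    (hnn : ∀ x y, 0 ≤ μ x y)
    (hdpos : ∀ x, 0 < d x) (m k : ℝ) (hm : 0 < m)
    (hcurv : ∀ g : V → ℝ, ∀ x, (1 / m) * (glap N μ d g x) ^ 2 + (k / 2) * ggrad N μ d g x
      ≤ ggamma2 N μ d g x)
    (f : ℝ → V → ℝ)
    (hheat : ∀ x t, HasDerivAt (fun s => f s x) (glap N μ d (f t) x) t)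
    (t : ℝ) (x : V) :
    deriv (fun s => (1 / 2) * ggrad N μ d (f s) x) t
        - glap N μ d (fun y => (1 / 2) * ggrad N μ d (f t) y) x
      ≤ (-k + max (2 - 2 / m) 0) * ggrad N μ d (f t) x := by
  have hderiv := ((hasDerivAt_ggrad N μ d (fun y => hheat y t) x).const_mul (1 / 2)).deriv
  rw [hderiv, ← mul_assoc, one_div_mul_cancel two_ne_zero, one_mul,
    ginner_glap_sub_glap_half_ggrad]
  have hgrad := ggrad_nonneg N μ d hnn hdpos (f t) x
  have hmax : 0 ≤ max (2 - 2 / m) 0 * ggrad N μ d (f t) x :=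
    mul_nonneg (le_max_right _ _) hgrad
  have hlap : 0 ≤ (1 / m) * (glap N μ d (f t) x) ^ 2 :=
    mul_nonneg (one_div_nonneg.mpr hm.le) (sq_nonneg _)
  linarith [hcurv (f t) x]

/-- under the curvature condition CD(k,m), for a solution of
the heat equation, `(∂ₜ - Δ)((1/2)|∇f|²) ≤ (-k + max(2 - 2/m, 0)) |∇f|²`. -/
theorem stmt10 {V : Type*} (N : V → Finset V) (μ : V → V → ℝ) (d : V → ℝ)
    (hsym : ∀ x y, μ x y = μ y x) (hN : ∀ x y, y ∈ N x ↔ x ∈ N y)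
    (hnn : ∀ x y, 0 ≤ μ x y) (hd : ∀ x, d x = ∑ y ∈ N x, μ x y)
    (hdpos : ∀ x, 0 < d x) (m k : ℝ) (hm : 0 < m)
    (hcurv : ∀ g : V → ℝ, ∀ x, (1 / m) * (glap N μ d g x) ^ 2 + (k / 2) * ggrad N μ d g x
      ≤ ggamma2 N μ d g x)
    (f : ℝ → V → ℝ)
    (hheat : ∀ x t, HasDerivAt (fun s => f s x) (glap N μ d (f t) x) t)
    (t : ℝ) (x : V) :
    deriv (fun s => (1 / 2) * ggrad N μ d (f s) x) t
        - glap N μ d (fun y => (1 / 2) * ggrad N μ d (f t) y) x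
      ≤ (-k + max (2 - 2 / m) 0) * ggrad N μ d (f t) x :=
  stmt10_general N μ d hnn hdpos m k hm hcurv f hheat t x
end

section
/- Comparison from the maximum principle: if G is a locally finite connected weighted graph with mean curvature H(x) = Δd(·,x₀)(x) ≤ C for some vertex x₀ and constant C ≥ 0, and if u(t,x) is a bounded solution of the heat equation ∂_t u = Δu on [0,∞) × V with initial data u(0,·) = u₀ bounded, then sup_{x∈V} |u(t,x)| ≤ sup_{x∈V} |u₀(x)| for every t ≥ 0. -/
open Finset Real

/-!
The graph distance `ρ = d(·, x₀)` is a barrier: it is nonnegative, its sublevel sets are finite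
balls, and `Δρ ≤ C`. Given `T > 0` and `ε > 0`, the function `u - M₀ - ε (ρ + (C + 1) t)` is
nonpositive at `t = 0`, negative outside a finite ball on `[0, T]` because `u` is bounded there,
and a strict subsolution of the heat equation. A positive maximum over `[0, T]` times the ball
would then sit at a time `t > 0` where `∂ₜ ≥ 0 ≥ Δ`, which is impossible. Letting `ε → 0` gives
`u ≤ M₀`, and the same argument for `-u` gives the lower bound.
-/

open Filter Topology

theorem HasDerivAt.nonneg_of_isMaxOn_Icc {f : ℝ → ℝ} {f' a b : ℝ} (hf : HasDerivAt f f' b)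
    (hab : a < b) (hmax : IsMaxOn f (Set.Icc a b) b) : 0 ≤ f' := by
  refine ge_of_tendsto hf.tendsto_slope_zero_left ?_
  filter_upwards [Ioo_mem_nhdsLT (sub_neg.2 hab)] with h hh
  have hmem : b + h ∈ Set.Icc a b := ⟨by linarith [hh.1], by linarith [hh.2]⟩
  exact smul_nonneg_of_nonpos_of_nonpos (inv_nonpos.2 hh.2.le) (sub_nonpos.2 (hmax hmem))

theorem SimpleGraph.Connected.finite_setOf_dist_le {V : Type*} {G : SimpleGraph V}
    (hconn : G.Connected) (hG : ∀ x, (G.neighborSet x).Finite) (x₀ : V) (r : ℕ) :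
    {x | G.dist x x₀ ≤ r}.Finite := by
  induction r with
  | zero => simp [hconn.dist_eq_zero_iff]
  | succ r ih =>
    refine (ih.union (ih.biUnion fun y _ => hG y)).subset fun x hx => ?_
    obtain ⟨p, hp⟩ := hconn.exists_walk_length_eq_dist x x₀
    cases p with
    | nil => exact Or.inl (by simp)
    | @cons _ y _ hxy q =>
      have hy : G.dist y x₀ ≤ r := by
        have := G.dist_le q
        simp only [SimpleGraph.Walk.length_cons] at hp
        change G.dist x x₀ ≤ r + 1 at hx
        omega
      exact Or.inr (Set.mem_biUnion hy hxy.symm)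

section GraphHeatEquation

variable {V : Type*} {N : V → Finset V} {μ : V → V → ℝ} {d : V → ℝ}

theorem glap_neg (f : V → ℝ) (x : V) :
    glap N μ d (fun y => -f y) x = -glap N μ d f x := by
  simp only [glap, ← mul_neg, ← Finset.sum_neg_distrib]
  congr 1
  exact Finset.sum_congr rfl fun y _ => by ring

theorem glap_sub_const_mul_sub_const (f g : V → ℝ) (c a : ℝ) (x : V) :
    glap N μ d (fun y => f y - c * g y - a) x = glap N μ d f x - c * glap N μ d g x := by
  simp only [glap, Finset.mul_sum, ← Finset.sum_sub_distrib]
  exact Finset.sum_congr rfl fun y _ => by ring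

theorem glap_nonpos_of_le {f : V → ℝ} {x : V} (hμ : ∀ y ∈ N x, 0 ≤ μ x y) (hd : 0 ≤ d x)
    (hf : ∀ y ∈ N x, f y ≤ f x) : glap N μ d f x ≤ 0 :=
  mul_nonpos_of_nonneg_of_nonpos (one_div_nonneg.2 hd) <|
    Finset.sum_nonpos fun y hy => mul_nonpos_of_nonneg_of_nonpos (hμ y hy) (sub_nonpos.2 (hf y hy))

theorem nonpos_of_strict_heat_subsolution {w w' : ℝ → V → ℝ} {T : ℝ} (S : Finset V)
    (hμ : ∀ x y, 0 ≤ μ x y) (hd : ∀ x, 0 ≤ d x)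
    (hcont : ∀ x, ContinuousOn (fun t => w t x) (Set.Icc 0 T))
    (hderiv : ∀ x, ∀ t ∈ Set.Ioc 0 T, HasDerivAt (fun s => w s x) (w' t x) t)
    (hsub : ∀ x, ∀ t ∈ Set.Ioc 0 T, w' t x < glap N μ d (w t) x)
    (hinit : ∀ x, w 0 x ≤ 0) (hout : ∀ t ∈ Set.Icc 0 T, ∀ x ∉ S, w t x ≤ 0) :
    ∀ t ∈ Set.Icc 0 T, ∀ x, w t x ≤ 0 := by
  intro t ht x
  by_contra! hpos
  have hxS : x ∈ S := by_contra fun hx => hpos.not_ge (hout t ht x hx)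
  have hS : S.Nonempty := ⟨x, hxS⟩
  obtain ⟨t', ht', htmax⟩ := isCompact_Icc.exists_isMaxOn ⟨t, ht⟩
    (ContinuousOn.finset_sup'_apply hS fun y _ => hcont y)
  obtain ⟨x', hx'S, hx'⟩ := Finset.exists_mem_eq_sup' hS fun y => w t' y
  have hmax : ∀ s ∈ Set.Icc 0 T, ∀ y ∈ S, w s y ≤ w t' x' := fun s hs y hy =>
    ((Finset.le_sup' (fun y => w s y) hy).trans (htmax hs)).trans hx'.le
  have hpos' : 0 < w t' x' := hpos.trans_le (hmax t ht x hxS)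
  have ht'pos : 0 < t' := ht'.1.lt_of_ne fun h => (hinit x').not_gt (h ▸ hpos')
  have hspace : glap N μ d (w t') x' ≤ 0 := by
    refine glap_nonpos_of_le (fun y _ => hμ x' y) (hd x') fun y _ => ?_
    by_cases hy : y ∈ S
    · exact hmax t' ht' y hy
    · exact (hout t' ht' y hy).trans hpos'.le
  have htime : 0 ≤ w' t' x' :=
    (hderiv x' t' ⟨ht'pos, ht'.2⟩).nonneg_of_isMaxOn_Icc ht'pos
      fun s hs => hmax s ⟨hs.1, hs.2.trans ht'.2⟩ x' hx'S
  linarith [hsub x' t' ⟨ht'pos, ht'.2⟩]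

theorem heat_le_add_barrier {u : ℝ → V → ℝ} {ρ : V → ℝ} {k T M M₀ ε : ℝ}
    (hμ : ∀ x y, 0 ≤ μ x y) (hd : ∀ x, 0 ≤ d x)
    (hρ : ∀ x, 0 ≤ ρ x) (hρfin : ∀ R, {x | ρ x ≤ R}.Finite)
    (hΔρ : ∀ x, glap N μ d ρ x < k) (hk : 0 ≤ k)
    (hheat : ∀ x, ∀ t ∈ Set.Ioc 0 T, HasDerivAt (fun s => u s x) (glap N μ d (u t) x) t)
    (hcont : ∀ x, ContinuousOn (fun t => u t x) (Set.Icc 0 T))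
    (hM : ∀ t ∈ Set.Icc 0 T, ∀ x, u t x ≤ M) (hM₀ : ∀ x, u 0 x ≤ M₀) (hε : 0 < ε) :
    ∀ t ∈ Set.Icc 0 T, ∀ x, u t x ≤ M₀ + ε * (ρ x + k * t) := by
  set w : ℝ → V → ℝ := fun t x => u t x - ε * ρ x - (M₀ + ε * k * t)
  suffices h : ∀ t ∈ Set.Icc 0 T, ∀ x, w t x ≤ 0 by
    intro t ht x
    linarith [h t ht x]
  refine nonpos_of_strict_heat_subsolution (N := N) (w' := fun t x => glap N μ d (u t) x - ε * k)
    (hρfin ((M - M₀) / ε)).toFinset hμ hd (fun x => ?_) (fun x t ht => ?_) (fun x t ht => ?_)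
    (fun x => ?_) (fun t ht x hx => ?_)
  · exact ((hcont x).sub continuousOn_const).sub (by fun_prop)
  · have h := ((hheat x t ht).sub_const (ε * ρ x)).sub
      (((hasDerivAt_id' t).const_mul (ε * k)).const_add M₀)
    rwa [mul_one] at h
  · rw [glap_sub_const_mul_sub_const]
    linarith [mul_lt_mul_of_pos_left (hΔρ x) hε]
  · have := mul_nonneg hε.le (hρ x)
    simp only [w]
    linarith [hM₀ x]
  · rw [Set.Finite.mem_toFinset, Set.mem_ofPred_eq, not_le, div_lt_iff₀ hε] at hx
    have := mul_nonneg (mul_nonneg hε.le hk) ht.1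
    simp only [w]
    linarith [hM t ht x]

theorem heat_le_of_barrier {u : ℝ → V → ℝ} {ρ : V → ℝ} {k T M M₀ : ℝ}
    (hμ : ∀ x y, 0 ≤ μ x y) (hd : ∀ x, 0 ≤ d x)
    (hρ : ∀ x, 0 ≤ ρ x) (hρfin : ∀ R, {x | ρ x ≤ R}.Finite)
    (hΔρ : ∀ x, glap N μ d ρ x < k) (hk : 0 ≤ k)
    (hheat : ∀ x, ∀ t ∈ Set.Ioc 0 T, HasDerivAt (fun s => u s x) (glap N μ d (u t) x) t)
    (hcont : ∀ x, ContinuousOn (fun t => u t x) (Set.Icc 0 T))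
    (hM : ∀ t ∈ Set.Icc 0 T, ∀ x, u t x ≤ M) (hM₀ : ∀ x, u 0 x ≤ M₀) :
    ∀ t ∈ Set.Icc 0 T, ∀ x, u t x ≤ M₀ := by
  intro t ht x
  have hlim : Tendsto (fun ε => M₀ + ε * (ρ x + k * t)) (𝓝[>] 0) (𝓝 M₀) :=
    ((continuous_const.add (continuous_id.mul continuous_const)).tendsto' 0 M₀
      (by simp)).mono_left nhdsWithin_le_nhds
  exact ge_of_tendsto hlim <| eventually_nhdsWithin_of_forall fun ε hε =>
    heat_le_add_barrier hμ hd hρ hρfin hΔρ hk hheat hcont hM hM₀ hε t ht x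

theorem abs_heat_le_of_barrier {u : ℝ → V → ℝ} {ρ : V → ℝ} {k T M M₀ : ℝ}
    (hμ : ∀ x y, 0 ≤ μ x y) (hd : ∀ x, 0 ≤ d x)
    (hρ : ∀ x, 0 ≤ ρ x) (hρfin : ∀ R, {x | ρ x ≤ R}.Finite)
    (hΔρ : ∀ x, glap N μ d ρ x < k) (hk : 0 ≤ k)
    (hheat : ∀ x, ∀ t ∈ Set.Ioc 0 T, HasDerivAt (fun s => u s x) (glap N μ d (u t) x) t)
    (hcont : ∀ x, ContinuousOn (fun t => u t x) (Set.Icc 0 T))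
    (hM : ∀ t ∈ Set.Icc 0 T, ∀ x, |u t x| ≤ M) (hM₀ : ∀ x, |u 0 x| ≤ M₀) :
    ∀ t ∈ Set.Icc 0 T, ∀ x, |u t x| ≤ M₀ := by
  intro t ht x
  have hupper := heat_le_of_barrier hμ hd hρ hρfin hΔρ hk hheat hcont
    (fun t ht x => (abs_le.1 (hM t ht x)).2) (fun x => (abs_le.1 (hM₀ x)).2) t ht x
  have hlower := heat_le_of_barrier (u := fun t x => -u t x) hμ hd hρ hρfin hΔρ hk
    (fun x t ht => glap_neg (u t) x ▸ (hheat x t ht).neg) (fun x => (hcont x).neg)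
    (fun t ht x => neg_le.1 (abs_le.1 (hM t ht x)).1) (fun x => neg_le.1 (abs_le.1 (hM₀ x)).1)
    t ht x
  exact abs_le.2 ⟨neg_le.1 hlower, hupper⟩

end GraphHeatEquation

theorem stmt12_general {V : Type*} (G : SimpleGraph V)
    (hconn : G.Connected)
    (N : V → Finset V) (μ : V → V → ℝ) (d : V → ℝ)
    (hadj : ∀ x y, y ∈ N x ↔ G.Adj x y)
    (hnn : ∀ x y, 0 ≤ μ x y)
    (hdpos : ∀ x, 0 < d x)
    (x₀ : V) (C : ℝ) (hC : 0 ≤ C)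
    (hH : ∀ x, glap N μ d (fun y => (G.dist y x₀ : ℝ)) x ≤ C)
    (u : ℝ → V → ℝ)
    (hheat : ∀ x, ∀ t ≥ (0 : ℝ), HasDerivAt (fun s => u s x) (glap N μ d (u t) x) t)
    (hcont : ∀ x, Continuous fun t => u t x)
    (hbdd : ∀ T > (0 : ℝ), ∃ M, ∀ t ∈ Set.Icc (0 : ℝ) T, ∀ x, |u t x| ≤ M)
    (M₀ : ℝ) (hM₀ : ∀ x, |u 0 x| ≤ M₀) :
    ∀ t ≥ (0 : ℝ), ∀ x, |u t x| ≤ M₀ := by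
  intro t ht x
  rcases ht.eq_or_lt with rfl | htpos
  · exact hM₀ x
  obtain ⟨M, hM⟩ := hbdd t htpos
  have hloc : ∀ y, (G.neighborSet y).Finite := fun y =>
    (N y).finite_toSet.subset fun z hz => (hadj y z).2 hz
  have hball : ∀ R : ℝ, {y | (G.dist y x₀ : ℝ) ≤ R}.Finite := fun R =>
    (hconn.finite_setOf_dist_le hloc x₀ ⌈R⌉₊).subset fun y hy =>
      Nat.cast_le.1 ((show (G.dist y x₀ : ℝ) ≤ R from hy).trans (Nat.le_ceil R))
  exact abs_heat_le_of_barrier hnn (fun y => (hdpos y).le) (fun y => Nat.cast_nonneg _) hball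
    (fun y => (hH y).trans_lt (lt_add_one C)) (by linarith) (fun y s hs => hheat y s hs.1.le)
    (fun y => (hcont y).continuousOn) hM hM₀ t ⟨ht, le_rfl⟩ x

/-- maximum principle for bounded solutions of the heat equation
on a graph whose mean curvature `H(x) = Δd(·,x₀)(x)` is bounded above. -/
theorem stmt12 {V : Type*} (G : SimpleGraph V) [DecidableRel G.Adj]
    (hinf : Infinite V) (hconn : G.Connected)
    (N : V → Finset V) (μ : V → V → ℝ) (d : V → ℝ)
    (hadj : ∀ x y, y ∈ N x ↔ G.Adj x y)
    (hsym : ∀ x y, μ x y = μ y x) (hnn : ∀ x y, 0 ≤ μ x y)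
    (hd : ∀ x, d x = ∑ y ∈ N x, μ x y) (hdpos : ∀ x, 0 < d x)
    (x₀ : V) (C : ℝ) (hC : 0 ≤ C)
    (hH : ∀ x, glap N μ d (fun y => (G.dist y x₀ : ℝ)) x ≤ C)
    (u : ℝ → V → ℝ)
    (hheat : ∀ x, ∀ t ≥ (0 : ℝ), HasDerivAt (fun s => u s x) (glap N μ d (u t) x) t)
    (hcont : ∀ x, Continuous fun t => u t x)
    (hbdd : ∀ T > (0 : ℝ), ∃ M, ∀ t ∈ Set.Icc (0 : ℝ) T, ∀ x, |u t x| ≤ M)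
    (M₀ : ℝ) (hM₀ : ∀ x, |u 0 x| ≤ M₀) :
    ∀ t ≥ (0 : ℝ), ∀ x, |u t x| ≤ M₀ :=
  stmt12_general G hconn N μ d hadj hnn hdpos x₀ C hC hH u hheat hcont hbdd M₀ hM₀
end

section
/- Maximum principle for the logarithmic porous medium equation: if G is a locally finite connected weighted graph with H(x) = Δd(·,x₀)(x) ≤ C for some vertex x₀ and constant C ≥ 0, v₀ is a bounded positive function on V, and v(t,x) is a bounded positive solution of ∂_t v = Δ(log v) on [0,T) × V with v(0,·) = v₀, then sup_{x∈V} v(t,x) ≤ sup_{x∈V} v₀(x) for every t ∈ [0,T). -/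
/-
Penalise `v` by `δ (A t + D)` with `D = d(·, x₀)`. Since `v` is bounded and `D → ∞`, the penalised
function attains its maximum over `[0, t] × V`; if that maximum exceeded `sup v₀`, it would sit at
some `(t', x')` with `t' > 0` and `v(t', x') > sup v₀`. There `∂ₜ v ≥ δ A`, while
`log b - log a ≤ (b - a) / a` and `ΔD ≤ C` give `Δ log v ≤ δ C / v`, so `A v(t', x') ≤ C`, which
is impossible for `A = C / sup v₀ + 1`. Letting `δ → 0` gives the claim.
-/

open Finset Real

open Filter Set Topology

theorem IsMaxOn.hasDerivAt_nonneg {f : ℝ → ℝ} {f' a b : ℝ} (h : IsMaxOn f (Icc a b) b)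
    (hab : a < b) (hf : HasDerivAt f f' b) : 0 ≤ f' := by
  have hcone : a - b ∈ posTangentConeAt (Icc a b) b :=
    sub_mem_posTangentConeAt_of_segment_subset (by rw [segment_symm, segment_eq_Icc hab.le])
  have := h.localize.hasFDerivWithinAt_nonpos hf.hasFDerivAt.hasFDerivWithinAt hcone
  rw [ContinuousLinearMap.toSpanSingleton_apply, smul_eq_mul] at this
  nlinarith

theorem exists_forall_le_of_eventually_lt {X V β : Type*} [TopologicalSpace X] [LinearOrder β]
    [TopologicalSpace β] [ClosedIciTopology β] {K : Set X} (hK : IsCompact K)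
    {F : X → V → β} (hF : ∀ x, ContinuousOn (F · x) K) {c : β}
    (hfar : ∀ᶠ x in cofinite, ∀ t ∈ K, F t x < c) {t₁ : X} {x₁ : V} (ht₁ : t₁ ∈ K)
    (hc : c ≤ F t₁ x₁) : ∃ t' ∈ K, ∃ x', ∀ t ∈ K, ∀ x, F t x ≤ F t' x' := by
  choose ts hts hmax using fun x => hK.exists_isMaxOn ⟨t₁, ht₁⟩ (hF x)
  set S := {x | ¬∀ t ∈ K, F t x < c}
  have hx₁ : x₁ ∈ S := fun h => (h t₁ ht₁).not_ge hc
  obtain ⟨x', -, hx'⟩ := S.exists_max_image (fun x => F (ts x) x) (eventually_cofinite.1 hfar)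
    ⟨x₁, hx₁⟩
  refine ⟨ts x', hts x', x', fun t ht x => ?_⟩
  by_cases hx : x ∈ S
  · exact (hmax x ht).trans (hx' x hx)
  · exact ((not_not.1 hx t ht).le.trans hc).trans ((hmax x₁ ht₁).trans (hx' x₁ hx₁))

namespace SimpleGraph

variable {V : Type*} {G : SimpleGraph V}

theorem Connected.finite_setOf_dist_le_s13 (hconn : G.Connected)
    (hfin : ∀ x, (G.neighborSet x).Finite) (x₀ : V) (n : ℕ) :
    {x | G.dist x x₀ ≤ n}.Finite := by
  induction n with
  | zero => simp [hconn.dist_eq_zero_iff]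
  | succ n ih =>
    refine (ih.union (ih.biUnion fun y _ => hfin y)).subset fun x hx => ?_
    obtain ⟨p, hp⟩ := hconn.exists_walk_length_eq_dist x x₀
    cases p with
    | nil => exact Or.inl (by simp)
    | @cons _ y _ hxy q =>
      have hq : G.dist y x₀ ≤ n := by
        have := dist_le q
        simp only [Walk.length_cons, mem_ofPred_eq] at hp hx
        omega
      exact Or.inr (mem_biUnion hq ((mem_neighborSet _ _ _).2 hxy.symm))

theorem Connected.tendsto_dist_cofinite_atTop (hconn : G.Connected)
    (hfin : ∀ x, (G.neighborSet x).Finite) (x₀ : V) :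
    Tendsto (G.dist · x₀) cofinite atTop :=
  tendsto_atTop.2 fun n => eventually_cofinite.2 <|
    (hconn.finite_setOf_dist_le_s13 hfin x₀ n).subset fun _ hx => (not_le.1 hx).le

end SimpleGraph

section Laplacian

variable {V : Type*} {N : V → Finset V} {μ : V → V → ℝ} {d : V → ℝ}

theorem glap_mono {f g : V → ℝ} {x : V} (hμ : ∀ y, 0 ≤ μ x y) (hd : 0 < d x)
    (h : ∀ y ∈ N x, f y - f x ≤ g y - g x) : glap N μ d f x ≤ glap N μ d g x := by
  unfold glap
  have hsum := Finset.sum_le_sum fun y hy => mul_le_mul_of_nonneg_left (h y hy) (hμ y)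
  exact mul_le_mul_of_nonneg_left hsum (by positivity)

theorem glap_const_mul (c : ℝ) (f : V → ℝ) (x : V) :
    glap N μ d (fun y => c * f y) x = c * glap N μ d f x := by
  unfold glap
  conv_rhs => rw [mul_left_comm, Finset.mul_sum]
  congr 1
  exact Finset.sum_congr rfl fun _ _ => by ring

theorem glap_log_le_div {u φ : V → ℝ} {x : V} (hμ : ∀ y, 0 ≤ μ x y) (hd : 0 < d x)
    (hu : ∀ y, 0 < u y) (h : ∀ y ∈ N x, u y - u x ≤ φ y - φ x) :
    glap N μ d (fun y => Real.log (u y)) x ≤ glap N μ d φ x / u x := by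
  rw [div_eq_inv_mul, ← glap_const_mul]
  refine glap_mono hμ hd fun y hy => ?_
  calc Real.log (u y) - Real.log (u x) = Real.log (u y / u x) :=
        (Real.log_div (hu y).ne' (hu x).ne').symm
    _ ≤ u y / u x - 1 := Real.log_le_sub_one_of_pos (div_pos (hu y) (hu x))
    _ = (u x)⁻¹ * (u y - u x) := by field_simp [(hu x).ne']
    _ ≤ (u x)⁻¹ * (φ y - φ x) := mul_le_mul_of_nonneg_left (h y hy) (inv_nonneg.2 (hu x).le)
    _ = (u x)⁻¹ * φ y - (u x)⁻¹ * φ x := by ring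

end Laplacian

section LogPorousMedium

variable {V : Type*} {N : V → Finset V} {μ : V → V → ℝ} {d : V → ℝ} {v : ℝ → V → ℝ} {T : ℝ}
  {D : V → ℝ} {C : ℝ}

theorem mul_le_of_isMaxOn_sub_penalty (hμ : ∀ x y, 0 ≤ μ x y) (hd : ∀ x, 0 < d x)
    (hD : ∀ x, glap N μ d D x ≤ C) {δ A t' : ℝ} {x' : V} (hδ : 0 < δ) (ht' : 0 < t')
    (hv : ∀ y, 0 < v t' y)
    (hheat : HasDerivAt (fun s => v s x') (glap N μ d (fun y => Real.log (v t' y)) x') t')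
    (hmax : ∀ s ∈ Set.Icc (0 : ℝ) t', ∀ y,
      v s y - δ * (A * s + D y) ≤ v t' x' - δ * (A * t' + D x')) :
    A * v t' x' ≤ C := by
  set L := glap N μ d (fun y => Real.log (v t' y)) x'
  have htime : δ * A ≤ L := by
    have hder : HasDerivAt (fun s => v s x' - δ * (A * s + D x')) (L - δ * A) t' := by
      have h := hheat.sub
        ((((hasDerivAt_id t').const_mul A).add_const (D x')).const_mul δ)
      rwa [mul_one] at h
    have := IsMaxOn.hasDerivAt_nonneg (fun s hs => hmax s hs x') ht' hder
    linarith
  have hspace : L ≤ δ * C / v t' x' :=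
    calc L ≤ glap N μ d (fun y => δ * D y) x' / v t' x' :=
          glap_log_le_div (hμ x') (hd x') hv fun y _ => by
            linarith [hmax t' ⟨ht'.le, le_rfl⟩ y]
      _ = δ * glap N μ d D x' / v t' x' := by rw [glap_const_mul]
      _ ≤ δ * C / v t' x' :=
          div_le_div_of_nonneg_right (mul_le_mul_of_nonneg_left (hD x') hδ.le) (hv x').le
  have := htime.trans hspace
  rw [le_div_iff₀ (hv x'), mul_assoc] at this
  exact le_of_mul_le_mul_left this hδ

theorem sub_penalty_le (hμ : ∀ x y, 0 ≤ μ x y) (hd : ∀ x, 0 < d x)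
    (hpos : ∀ t ∈ Set.Ico (0 : ℝ) T, ∀ x, 0 < v t x)
    (hbdd : ∃ M, ∀ t ∈ Set.Ico (0 : ℝ) T, ∀ x, v t x ≤ M)
    (hheat : ∀ x, ∀ t ∈ Set.Ico (0 : ℝ) T,
      HasDerivAt (fun s => v s x) (glap N μ d (fun y => Real.log (v t y)) x) t)
    (hD : ∀ x, glap N μ d D x ≤ C) (hD₀ : ∀ x, 0 ≤ D x) (hDtop : Tendsto D cofinite atTop)
    {M₀ : ℝ} (hM₀ : ∀ x, v 0 x ≤ M₀) {A δ : ℝ} (hA : 0 ≤ A) (hAC : C < A * M₀) (hδ : 0 < δ)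
    {t : ℝ} (ht : t ∈ Set.Ico (0 : ℝ) T) (x : V) :
    v t x - δ * (A * t + D x) ≤ M₀ := by
  by_contra! hlt
  obtain ⟨M, hM⟩ := hbdd
  set F := fun s y => v s y - δ * (A * s + D y) with hF
  have hK : ∀ s ∈ Set.Icc 0 t, s ∈ Set.Ico 0 T := fun s hs => ⟨hs.1, hs.2.trans_lt ht.2⟩
  have hcont : ∀ y, ContinuousOn (F · y) (Set.Icc 0 t) := fun y s hs =>
    ((hheat y s (hK s hs)).continuousAt.sub (by fun_prop)).continuousWithinAt
  have hfar : ∀ᶠ y in cofinite, ∀ s ∈ Set.Icc 0 t, F s y < M₀ :=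
    (hDtop.eventually_gt_atTop ((M - M₀) / δ)).mono fun y hy s hs => by
      rw [div_lt_iff₀ hδ] at hy
      nlinarith [hM s (hK s hs) y, mul_nonneg hδ.le (mul_nonneg hA hs.1)]
  obtain ⟨t', ht', x', hmax⟩ :=
    exists_forall_le_of_eventually_lt isCompact_Icc hcont hfar ⟨ht.1, le_rfl⟩ hlt.le
  have hF' : M₀ < F t' x' := hlt.trans_le (hmax t ⟨ht.1, le_rfl⟩ x)
  have hpenalty : 0 ≤ δ * (A * t' + D x') := by have := hD₀ x'; have := ht'.1; positivity
  have hv' : M₀ < v t' x' := by simp only [hF] at hF'; linarith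
  have ht'pos : 0 < t' := by
    refine ht'.1.lt_of_ne fun h => ?_
    subst h
    linarith [hM₀ x']
  have := mul_le_of_isMaxOn_sub_penalty hμ hd hD hδ ht'pos (hpos t' (hK t' ht'))
    (hheat x' t' (hK t' ht')) fun s hs y => hmax s ⟨hs.1, hs.2.trans ht'.2⟩ y
  nlinarith [mul_le_mul_of_nonneg_left hv'.le hA]

end LogPorousMedium

theorem stmt13_general {V : Type*} (G : SimpleGraph V)
    (hconn : G.Connected)
    (N : V → Finset V) (μ : V → V → ℝ) (d : V → ℝ)
    (hadj : ∀ x y, y ∈ N x ↔ G.Adj x y)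
    (hnn : ∀ x y, 0 ≤ μ x y)
    (hdpos : ∀ x, 0 < d x)
    (x₀ : V) (C : ℝ) (hC : 0 ≤ C)
    (hH : ∀ x, glap N μ d (fun y => (G.dist y x₀ : ℝ)) x ≤ C)
    (T : ℝ) (v : ℝ → V → ℝ)
    (hpos : ∀ t ∈ Set.Ico (0 : ℝ) T, ∀ x, 0 < v t x)
    (hbdd : ∃ M, ∀ t ∈ Set.Ico (0 : ℝ) T, ∀ x, v t x ≤ M)
    (hheat : ∀ x, ∀ t ∈ Set.Ico (0 : ℝ) T,
      HasDerivAt (fun s => v s x) (glap N μ d (fun y => Real.log (v t y)) x) t)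
    (M₀ : ℝ) (hM₀ : ∀ x, v 0 x ≤ M₀) :
    ∀ t ∈ Set.Ico (0 : ℝ) T, ∀ x, v t x ≤ M₀ := by
  intro t ht x
  have hM₀pos : 0 < M₀ := (hpos 0 ⟨le_rfl, ht.1.trans_lt ht.2⟩ x₀).trans_le (hM₀ x₀)
  have hfin : ∀ y, (G.neighborSet y).Finite := fun y =>
    (N y).finite_toSet.subset fun z hz => (hadj y z).2 hz
  have hDtop : Tendsto (fun y => (G.dist y x₀ : ℝ)) cofinite atTop :=
    tendsto_natCast_atTop_atTop.comp (hconn.tendsto_dist_cofinite_atTop hfin x₀)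
  set A := C / M₀ + 1
  have hAC : C < A * M₀ := by
    rw [add_mul, div_mul_cancel₀ C hM₀pos.ne']
    linarith
  have hpenalized : ∀ δ ∈ Set.Ioi (0 : ℝ), v t x ≤ M₀ + δ * (A * t + G.dist x x₀) :=
    fun δ hδ => by
      linarith [sub_penalty_le hnn hdpos hpos hbdd hheat hH (fun _ => Nat.cast_nonneg _) hDtop
        hM₀ (by positivity) hAC hδ ht x]
  have hlim : Tendsto (fun δ => M₀ + δ * (A * t + G.dist x x₀)) (𝓝[>] 0) (𝓝 M₀) :=
    tendsto_nhdsWithin_of_tendsto_nhds (Continuous.tendsto' (by fun_prop) 0 _ (by simp))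
  exact ge_of_tendsto hlim (eventually_mem_nhdsWithin.mono hpenalized)

/-- maximum principle for bounded positive solutions of the
logarithmic porous medium equation `∂ₜ v = Δ log v`. -/
theorem stmt13 {V : Type*} (G : SimpleGraph V) [DecidableRel G.Adj]
    (hinf : Infinite V) (hconn : G.Connected)
    (N : V → Finset V) (μ : V → V → ℝ) (d : V → ℝ)
    (hadj : ∀ x y, y ∈ N x ↔ G.Adj x y)
    (hsym : ∀ x y, μ x y = μ y x) (hnn : ∀ x y, 0 ≤ μ x y)
    (hd : ∀ x, d x = ∑ y ∈ N x, μ x y) (hdpos : ∀ x, 0 < d x)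
    (x₀ : V) (C : ℝ) (hC : 0 ≤ C)
    (hH : ∀ x, glap N μ d (fun y => (G.dist y x₀ : ℝ)) x ≤ C)
    (T : ℝ) (hT : 0 < T) (v : ℝ → V → ℝ)
    (hpos : ∀ t ∈ Set.Ico (0 : ℝ) T, ∀ x, 0 < v t x)
    (hbdd : ∃ M, ∀ t ∈ Set.Ico (0 : ℝ) T, ∀ x, v t x ≤ M)
    (hbelow : ∀ T', 0 ≤ T' → T' < T → ∃ ε > (0 : ℝ), ∀ t ∈ Set.Icc (0 : ℝ) T', ∀ x, ε ≤ v t x)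
    (hheat : ∀ x, ∀ t ∈ Set.Ico (0 : ℝ) T,
      HasDerivAt (fun s => v s x) (glap N μ d (fun y => Real.log (v t y)) x) t)
    (hcont : ∀ x, Continuous fun t => v t x)
    (M₀ : ℝ) (hM₀ : ∀ x, v 0 x ≤ M₀) :
    ∀ t ∈ Set.Ico (0 : ℝ) T, ∀ x, v t x ≤ M₀ :=
  stmt13_general G hconn N μ d hadj hnn hdpos x₀ C hC hH T v hpos hbdd hheat M₀ hM₀
end
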